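/- Let G be a finite Abelian group, H a subgroup with orthogonal subgroup H^⊥, f : G → {-1,1}, and r ∈ G. Define F_{r+H}f(x) = Σ_{γ ∈ r+H} f̂(χ_γ)² χ_γ(x). Then F_{r+H}f(x) = E_{z₁ ∈ G, z ∈ H^⊥}[ f(z₁) f(x − z₁ − z) χ_r(z) ]. -/

import Mathlib

open Finset

/-- `G = ZMod (p 0 ^ m 0) × ⋯ × ZMod (p (n-1) ^ m (n-1))`. -/
abbrev Gp (n : ℕ) (p m : Fin n → ℕ) := ∀ i : Fin n, ZMod (p i ^ m i)

/-- `L = lcm (p i ^ m i)`. -/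
abbrev Lnum (n : ℕ) (p m : Fin n → ℕ) : ℕ := Finset.univ.lcm fun i : Fin n => p i ^ m i

/-- The pseudo inner product `r * x = (∑ i, (L / pᵢ^mᵢ) rⁱ xⁱ) mod L`, valued in `ℤ_L`. -/
def pip {n : ℕ} {p m : Fin n → ℕ} (r x : Gp n p m) : ZMod (Lnum n p m) :=
  ∑ i : Fin n, (((Lnum n p m / p i ^ m i) * (r i).val * (x i).val : ℕ) : ZMod (Lnum n p m))

/-- The character of `G` indexed by `r`: `χ_r x = ω_L ^ (r * x)` where `ω_L = exp(2πi/L)`. -/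
noncomputable def chi {n : ℕ} {p m : Fin n → ℕ} (r x : Gp n p m) : ℂ :=
  Complex.exp (2 * Real.pi * Complex.I * ((pip r x).val : ℕ) / (Lnum n p m : ℕ))

/-- The Fourier coefficient `f̂(χ_r) = (1/|G|) ∑ x, f x * conj (χ_r x)`. -/
noncomputable def fhat {n : ℕ} {p m : Fin n → ℕ} [∀ i, NeZero (p i ^ m i)]
    (f : Gp n p m → ℂ) (r : Gp n p m) : ℂ :=
  (Fintype.card (Gp n p m) : ℂ)⁻¹ * ∑ x : Gp n p m, f x * (starRingEnd ℂ) (chi r x)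

/-!
Expanding the square, `f̂(χ_γ)² χ_γ(x) = |G|⁻² ∑_{a,b} f(a) f(b) χ_γ(x - a - b)`. Summing over
`γ ∈ r + H` factors out `χ_r(x - a - b)` times the character sum `∑_{h ∈ H} χ_h(x - a - b)`, which
is `|H|` when `x - a - b ∈ H^⊥` and `0` otherwise; substituting `z = x - a - b` gives the average up
to the constant `|H| / |G|²`. That this is `(|G| |H^⊥|)⁻¹` comes from evaluating
`∑_{y ∈ G} ∑_{h ∈ H} χ_h(y)` in both orders, the pairing being nondegenerate.
-/

lemma ZMod.natCast_div_mul_natCast_mod {L k : ℕ} (hk : k ∣ L) (s : ℕ) :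
    ((L / k : ℕ) : ZMod L) * ((s % k : ℕ) : ZMod L) = ((L / k : ℕ) : ZMod L) * s := by
  rw [← Nat.cast_mul, ← Nat.cast_mul, ZMod.natCast_eq_natCast_iff]
  simpa [Nat.div_mul_cancel hk] using (Nat.mod_modEq s k).mul_left' (L / k)

lemma ZMod.natCast_div_mul_eq_zero_iff {L k : ℕ} [NeZero L] (hk : k ∣ L) (v : ℕ) :
    ((L / k * v : ℕ) : ZMod L) = 0 ↔ (v : ZMod k) = 0 := by
  obtain ⟨c, rfl⟩ := hk
  have hk : 0 < k := Nat.pos_of_ne_zero (left_ne_zero_of_mul (NeZero.ne (k * c)))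
  have hc : 0 < c := Nat.pos_of_ne_zero (right_ne_zero_of_mul (NeZero.ne (k * c)))
  rw [ZMod.natCast_eq_zero_iff, ZMod.natCast_eq_zero_iff, Nat.mul_div_cancel_left _ hk,
    mul_comm k, Nat.mul_dvd_mul_iff_left hc]

lemma AddChar.sum_filter_mem_addSubgroup {G R : Type*} [AddGroup G] [Fintype G] [CommRing R]
    [IsDomain R] (ψ : AddChar G R) (S : AddSubgroup G) [DecidablePred (· ∈ S)]
    [Decidable (∀ s ∈ S, ψ s = 1)] :
    ∑ s ∈ univ.filter (· ∈ S), ψ s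
      = if ∀ s ∈ S, ψ s = 1 then (#(univ.filter (· ∈ S)) : R) else 0 := by
  classical
  rw [Finset.sum_subtype (p := (· ∈ S)) _ (fun _ => by simp) ψ]
  have := (ψ.compAddMonoidHom S.subtype).sum_eq_ite
  simp only [AddChar.compAddMonoidHom_apply, AddSubgroup.coe_subtype, AddChar.eq_zero_iff,
    Subtype.forall] at this
  rw [this, Fintype.card_subtype]

section
variable {n : ℕ} {p m : Fin n → ℕ}

lemma pow_dvd_Lnum (i : Fin n) : p i ^ m i ∣ Lnum n p m := dvd_lcm (mem_univ i)

lemma pip_comm (r x : Gp n p m) : pip r x = pip x r := by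
  simp only [pip, mul_right_comm]

lemma chi_comm (r x : Gp n p m) : chi r x = chi x r := by
  rw [chi, chi, pip_comm]

variable [∀ i, NeZero (p i ^ m i)]

instance : NeZero (Lnum n p m) :=
  ⟨fun h => by
    obtain ⟨i, -, hi⟩ := Finset.lcm_eq_zero_iff.mp h
    exact NeZero.ne _ hi⟩

lemma pip_add_right (r x y : Gp n p m) : pip r (x + y) = pip r x + pip r y := by
  simp only [pip, ← sum_add_distrib, Pi.add_apply, ZMod.val_add]
  refine sum_congr rfl fun i _ => ?_
  push_cast
  rw [mul_right_comm, ZMod.natCast_div_mul_natCast_mod (pow_dvd_Lnum i)]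
  push_cast
  ring

lemma eq_zero_of_forall_pip_eq_zero (w : Gp n p m) (hw : ∀ x, pip w x = 0) : w = 0 := by
  funext i
  have hi := hw (Pi.single i 1)
  rwa [pip, Fintype.sum_eq_single i fun j hj => by simp [Pi.single_eq_of_ne hj], Pi.single_eq_same,
    mul_assoc, ZMod.natCast_div_mul_eq_zero_iff (pow_dvd_Lnum i), Nat.cast_mul,
    ZMod.natCast_zmod_val, ZMod.natCast_zmod_val, mul_one] at hi

noncomputable def chiChar (r : Gp n p m) : AddChar (Gp n p m) ℂ :=
  (ZMod.stdAddChar (N := Lnum n p m)).compAddMonoidHom (AddMonoidHom.mk' (pip r) (pip_add_right r))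

lemma chiChar_apply (r x : Gp n p m) : chiChar r x = chi r x := by
  rw [chiChar, AddChar.compAddMonoidHom_apply, ZMod.stdAddChar_apply, ZMod.toCircle_apply]
  rfl

lemma chi_eq_one_iff (r x : Gp n p m) : chi r x = 1 ↔ pip r x = 0 := by
  rw [← chiChar_apply, chiChar, AddChar.compAddMonoidHom_apply,
    ← (ZMod.stdAddChar (N := Lnum n p m)).map_zero_eq_one, ZMod.injective_stdAddChar.eq_iff]
  rfl

lemma chiChar_eq_zero_iff (w : Gp n p m) : chiChar w = 0 ↔ w = 0 := by
  simp only [AddChar.eq_zero_iff, chiChar_apply, chi_eq_one_iff]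
  exact ⟨eq_zero_of_forall_pip_eq_zero w, by rintro rfl x; simp [pip]⟩

lemma chi_add_right (r x y : Gp n p m) : chi r (x + y) = chi r x * chi r y := by
  simp only [← chiChar_apply, AddChar.map_add_eq_mul]

lemma chi_add_left (r s x : Gp n p m) : chi (r + s) x = chi r x * chi s x := by
  rw [chi_comm, chi_add_right, chi_comm x, chi_comm x]

lemma conj_chi (r x : Gp n p m) : starRingEnd ℂ (chi r x) = chi r (-x) := by
  rw [← chiChar_apply, ← chiChar_apply, AddChar.map_neg_eq_conj]

lemma sum_chi_addSubgroup (H : AddSubgroup (Gp n p m)) [DecidablePred (· ∈ H)] (y : Gp n p m) :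
    ∑ h ∈ univ.filter (· ∈ H), chi h y
      = if ∀ h ∈ H, pip y h = 0 then (#(univ.filter (· ∈ H)) : ℂ) else 0 := by
  classical
  simp only [chi_comm _ y, ← chiChar_apply]
  rw [AddChar.sum_filter_mem_addSubgroup]
  simp only [chiChar_apply, chi_eq_one_iff]

lemma sum_chi_univ (h : Gp n p m) :
    ∑ x, chi h x = if h = 0 then (Fintype.card (Gp n p m) : ℂ) else 0 := by
  classical
  simp only [← chiChar_apply]
  rw [AddChar.sum_eq_ite]
  simp only [chiChar_eq_zero_iff]

lemma card_mul_card_annihilator (H : AddSubgroup (Gp n p m)) [DecidablePred (· ∈ H)] :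
    #(univ.filter (· ∈ H)) * #(univ.filter fun z : Gp n p m => ∀ y ∈ H, pip z y = 0)
      = Fintype.card (Gp n p m) := by
  have hcount : ∑ y : Gp n p m, ∑ h ∈ univ.filter (· ∈ H), chi h y
      = #(univ.filter fun z : Gp n p m => ∀ y ∈ H, pip z y = 0) * #(univ.filter (· ∈ H)) := by
    simp only [sum_chi_addSubgroup, ← sum_filter, sum_const, nsmul_eq_mul]
  have hswap :
      ∑ y : Gp n p m, ∑ h ∈ univ.filter (· ∈ H), chi h y = Fintype.card (Gp n p m) := by
    rw [sum_comm]
    simp [sum_chi_univ, H.zero_mem]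
  exact_mod_cast (mul_comm _ _).trans (hcount.symm.trans hswap)

lemma sum_chi_coset (H : AddSubgroup (Gp n p m)) [DecidablePred (· ∈ H)] (r y : Gp n p m) :
    ∑ γ ∈ univ.filter (fun γ : Gp n p m => γ - r ∈ H), chi γ y
      = if ∀ h ∈ H, pip y h = 0 then #(univ.filter (· ∈ H)) * chi r y else 0 := by
  have hshift : ∑ γ ∈ univ.filter (fun γ : Gp n p m => γ - r ∈ H), chi γ y
      = ∑ h ∈ univ.filter (· ∈ H), chi (r + h) y := by
    simp only [sum_filter]
    exact Fintype.sum_equiv (Equiv.subRight r) _ _ fun γ => by simp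
  rw [hshift]
  simp only [chi_add_left, ← mul_sum, sum_chi_addSubgroup]
  split_ifs <;> ring

lemma fhat_sq_mul_chi (g : Gp n p m → ℂ) (γ x : Gp n p m) :
    fhat g γ ^ 2 * chi γ x
      = ((Fintype.card (Gp n p m) : ℂ) ^ 2)⁻¹ * ∑ a, ∑ b, g a * g b * chi γ (x - a - b) := by
  simp only [fhat, sub_eq_add_neg, chi_add_right, conj_chi, sq, mul_sum, sum_mul, mul_inv]
  refine sum_congr rfl fun a _ => sum_congr rfl fun b _ => ?_
  ring

lemma sum_mul_sum_chi_coset (g : Gp n p m → ℂ) (H : AddSubgroup (Gp n p m))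
    [DecidablePred (· ∈ H)] (r y : Gp n p m) :
    ∑ a, ∑ b, g a * g b * ∑ γ ∈ univ.filter (fun γ : Gp n p m => γ - r ∈ H), chi γ (y - a - b)
      = #(univ.filter (· ∈ H))
          * ∑ a, ∑ z ∈ univ.filter (fun z : Gp n p m => ∀ h ∈ H, pip z h = 0),
              g a * g (y - a - z) * chi r z := by
  simp only [sum_chi_coset]
  simp only [mul_sum, sum_filter]
  refine sum_congr rfl fun a _ => Fintype.sum_equiv (Equiv.subLeft (y - a)) _ _ fun b => ?_
  simp only [Equiv.subLeft_apply, sub_sub_cancel]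
  split_ifs <;> ring

end

theorem squared_projection_eq_average_general (n : ℕ) (p m : Fin n → ℕ)
    [∀ i, NeZero (p i ^ m i)] (H : AddSubgroup (Gp n p m)) [DecidablePred (· ∈ H)]
    (f : Gp n p m → ℝ) (r x : Gp n p m) :
    ∑ γ ∈ Finset.univ.filter (fun γ : Gp n p m => γ - r ∈ H),
        (fhat (fun y => (f y : ℂ)) γ) ^ 2 * chi γ x
      = ((Fintype.card (Gp n p m) : ℂ)
            * ((Finset.univ.filter fun z : Gp n p m => ∀ y ∈ H, pip z y = 0).card : ℂ))⁻¹
          * ∑ z₁ : Gp n p m,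
              ∑ z ∈ Finset.univ.filter (fun z : Gp n p m => ∀ y ∈ H, pip z y = 0),
                ((f z₁ * f (x - z₁ - z) : ℝ) : ℂ) * chi r z := by
  set N : ℂ := (Fintype.card (Gp n p m) : ℂ)
  set K := univ.filter fun z : Gp n p m => ∀ y ∈ H, pip z y = 0
  set g : Gp n p m → ℂ := fun y => (f y : ℂ)
  have hN : N ≠ 0 := Nat.cast_ne_zero.mpr Fintype.card_ne_zero
  have hcard : (#(univ.filter (· ∈ H)) : ℂ) * #K = N := by
    rw [← Nat.cast_mul, card_mul_card_annihilator]
  have hK : (#K : ℂ) ≠ 0 := right_ne_zero_of_mul (hcard ▸ hN)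
  calc _ = (N ^ 2)⁻¹ * ∑ a, ∑ b, g a * g b
          * ∑ γ ∈ univ.filter (fun γ : Gp n p m => γ - r ∈ H), chi γ (x - a - b) := by
        simp only [fhat_sq_mul_chi, mul_sum]
        rw [sum_comm]
        exact sum_congr rfl fun a _ => sum_comm
    _ = (N ^ 2)⁻¹ * #(univ.filter (· ∈ H))
          * ∑ a, ∑ z ∈ K, g a * g (x - a - z) * chi r z := by
        rw [sum_mul_sum_chi_coset, mul_assoc]
    _ = _ := by
        push_cast
        congr 1
        field_simp
        linear_combination hcard

/-- The squared-coefficient projection onto the coset `r + H` satisfies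
`F_{r+H} f(x) = E_{z₁ ∈ G, z ∈ H^⊥} [f(z₁) f(x - z₁ - z) χ_r(z)]`. -/
theorem squared_projection_eq_average (n : ℕ) (p m : Fin n → ℕ) (hp : ∀ i, (p i).Prime)
    [∀ i, NeZero (p i ^ m i)] (H : AddSubgroup (Gp n p m)) [DecidablePred (· ∈ H)]
    (f : Gp n p m → ℝ) (hf : ∀ x, f x = 1 ∨ f x = -1) (r x : Gp n p m) :
    ∑ γ ∈ Finset.univ.filter (fun γ : Gp n p m => γ - r ∈ H),
        (fhat (fun y => (f y : ℂ)) γ) ^ 2 * chi γ x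
      = ((Fintype.card (Gp n p m) : ℂ)
            * ((Finset.univ.filter fun z : Gp n p m => ∀ y ∈ H, pip z y = 0).card : ℂ))⁻¹
          * ∑ z₁ : Gp n p m,
              ∑ z ∈ Finset.univ.filter (fun z : Gp n p m => ∀ y ∈ H, pip z y = 0),
                ((f z₁ * f (x - z₁ - z) : ℝ) : ℂ) * chi r z :=
  squared_projection_eq_average_general n p m H f r x
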